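/- Let T > 0 and let G : [0,T] → ℝ be a kernel that is continuous at 0 with G(0) > 0. Let h : ℝ → ℝ be a continuous, odd function that is not linear, i.e., there is no q ∈ ℝ with h(x) = q x for all x ∈ ℝ. Then for every integer M ≥ 3 there exist points t_0 < t_1 < … < t_{M-1} in [0,T] and real numbers x_0, …, x_{M-1} such that ∑_{i=0}^{M-1} ∑_{j=0}^{M-1} x_i · G(|t_i − t_j|) · h(x_j) < 0. -/

import Mathlib

/-!
A continuous additive function on `ℝ` is linear, so a continuous non-linear `h` has
`h (a + b) ≠ h a + h b` for some `a, b`. By oddness, a third trade `c` slightly off `-(a + b)`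
makes `a + b + c` and `h a + h b + h c` of opposite signs. Executing these trades (padded by
zeros) in a window so short that `G` stays close to `G 0`, the cost is close to
`G 0 * (∑ x) * (∑ h x) < 0`.
-/

open Finset Filter Topology Function

theorem exists_map_add_ne_of_not_linear {h : ℝ → ℝ} (hc : Continuous h)
    (hnl : ¬ ∃ q : ℝ, ∀ x : ℝ, h x = q * x) : ∃ a b : ℝ, h (a + b) ≠ h a + h b := by
  by_contra! hadd
  refine hnl ⟨h 1, fun x => ?_⟩
  simpa [mul_comm] using map_real_smul (AddMonoidHom.mk' h hadd) hc x 1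

theorem exists_sum_mul_sum_map_neg_of_map_add_ne {h : ℝ → ℝ} (hc : Continuous h)
    (hodd : ∀ x : ℝ, h (-x) = -h x) {a b : ℝ} (hab : h (a + b) ≠ h a + h b) :
    ∃ v : Fin 3 → ℝ, (∑ i, v i) * ∑ i, h (v i) < 0 := by
  set D := h a + h b - h (a + b)
  have hD : 0 < D * D := mul_self_pos.mpr (sub_ne_zero.mpr hab.symm)
  have hcont : Continuous fun ε : ℝ => D * (h a + h b - h (a + b + ε * D)) := by fun_prop
  have hev : ∀ᶠ ε in 𝓝[>] (0 : ℝ), 0 < D * (h a + h b - h (a + b + ε * D)) :=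
    nhdsWithin_le_nhds <| hcont.continuousAt.eventually <| lt_mem_nhds <| by
      simpa only [zero_mul, add_zero] using hD
  obtain ⟨ε, hε, hpos⟩ := (hev.and self_mem_nhdsWithin).exists
  refine ⟨![a, b, -(a + b + ε * D)], ?_⟩
  simp only [Fin.sum_univ_three, Matrix.cons_val, hodd]
  calc _ = -(ε * (D * (h a + h b - h (a + b + ε * D)))) := by ring
    _ < 0 := neg_neg_of_pos (mul_pos hpos hε)

theorem sum_comp_extend_zero {ι κ α β : Type*} [Fintype ι] [Fintype κ] [Zero α]
    [AddCommMonoid β] {e : ι → κ} (he : Injective e) (v : ι → α) {f : α → β} (hf : f 0 = 0) :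
    ∑ k, f (extend e v 0 k) = ∑ i, f (v i) :=
  (Fintype.sum_of_injective e he _ _ (fun k hk => by rw [extend_apply' _ _ _ hk]; exact hf)
    fun i => by rw [he.extend_apply]).symm

theorem exists_fin_sum_mul_sum_map_neg {h : ℝ → ℝ} (hc : Continuous h)
    (hodd : ∀ x : ℝ, h (-x) = -h x) (hnl : ¬ ∃ q : ℝ, ∀ x : ℝ, h x = q * x)
    {M : ℕ} (hM : 3 ≤ M) : ∃ x : Fin M → ℝ, (∑ i, x i) * ∑ i, h (x i) < 0 := by
  obtain ⟨a, b, hab⟩ := exists_map_add_ne_of_not_linear hc hnl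
  obtain ⟨v, hv⟩ := exists_sum_mul_sum_map_neg_of_map_add_ne hc hodd hab
  have h0 : h 0 = 0 := by linarith [neg_zero (G := ℝ) ▸ hodd 0]
  refine ⟨extend (Fin.castLE hM) v 0, ?_⟩
  convert hv using 2
  · exact sum_comp_extend_zero (Fin.castLE_injective hM) v (f := id) rfl
  · exact sum_comp_extend_zero (Fin.castLE_injective hM) v h0

/-- Twice the execution cost of the trades `x` at the times `t`. -/
noncomputable def executionCost {ι : Type*} [Fintype ι] (G h : ℝ → ℝ) (t x : ι → ℝ) : ℝ :=
  ∑ i, ∑ j, x i * G |t i - t j| * h (x j)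

theorem tendsto_executionCost_mul {ι : Type*} [Fintype ι] {G : ℝ → ℝ} (hG : ContinuousAt G 0)
    (h : ℝ → ℝ) (t x : ι → ℝ) :
    Tendsto (fun s : ℝ => executionCost G h (fun i => s * t i) x) (𝓝 0)
      (𝓝 (G 0 * (∑ i, x i) * ∑ j, h (x j))) := by
  rw [mul_comm (G 0), Finset.sum_mul, Finset.sum_mul_sum]
  refine tendsto_finsetSum _ fun i _ => tendsto_finsetSum _ fun j _ => ?_
  refine (tendsto_const_nhds.mul (hG.tendsto.comp ?_)).mul tendsto_const_nhds
  exact (by fun_prop : Continuous fun s : ℝ => |s * t i - s * t j|).tendsto' 0 0 (by simp)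

/-- **Price manipulation for convolution kernels (Theorem, part 2).**
Let `T > 0` and let `G : [0,T] → ℝ` be continuous at `0` with `G(0) > 0`.  Let
`h : ℝ → ℝ` be a continuous, odd function which is not linear.  Then for every
`M ≥ 3` there exist points `t_0 < … < t_{M-1}` in `[0,T]` and reals
`x_0, …, x_{M-1}` such that `∑_{i,j} x_i · G(|t_i − t_j|) · h(x_j) < 0`. -/
theorem price_manipulation_convolution_kernel
    (T : ℝ) (hT : 0 < T)
    (G : ℝ → ℝ) (hGcont : ContinuousAt G 0) (hGpos : 0 < G 0)
    (h : ℝ → ℝ) (hhcont : Continuous h)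
    (hhodd : ∀ x : ℝ, h (-x) = -h x)
    (hhnotlin : ¬ ∃ q : ℝ, ∀ x : ℝ, h x = q * x)
    (M : ℕ) (hM : 3 ≤ M) :
    ∃ t x : Fin M → ℝ, StrictMono t ∧ (∀ i, t i ∈ Set.Icc (0 : ℝ) T) ∧
      ∑ i : Fin M, ∑ j : Fin M, x i * G |t i - t j| * h (x j) < 0 := by
  obtain ⟨x, hx⟩ := exists_fin_sum_mul_sum_map_neg hhcont hhodd hhnotlin hM
  have hlim : G 0 * (∑ i, x i) * ∑ j, h (x j) < 0 := by
    rw [mul_assoc]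
    exact mul_neg_of_pos_of_neg hGpos hx
  have hMpos : (0 : ℝ) < M := by positivity
  have hev : ∀ᶠ s in 𝓝[>] 0, executionCost G h (fun i : Fin M => s * i) x < 0 ∧ s < T / M :=
    nhdsWithin_le_nhds <|
      ((tendsto_executionCost_mul hGcont h _ x).eventually (gt_mem_nhds hlim)).and
        (gt_mem_nhds (by positivity))
  obtain ⟨s, ⟨hneg, hsT⟩, hs : 0 < s⟩ := (hev.and self_mem_nhdsWithin).exists
  refine ⟨fun i => s * i, x, fun i j hij => by simp only; gcongr; exact hij,
    fun i => ⟨by positivity, ?_⟩, hneg⟩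
  calc s * i ≤ s * M := by gcongr; exact i.is_lt.le
    _ ≤ T := by rw [lt_div_iff₀ hMpos] at hsT; linarith
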